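/- Fix an integer k ≥ 0 and let μ = Λ_e − kδ. For every positive real root α_{ij;n} of ŝl_e, there exists a partition λ with Λ_e − Σ_{r=1}^e b_r(λ) α_r = μ + α_{ij;n} if and only if n < k. -/

import Mathlib

/-!
Comparing the coefficients of `δ` (the coordinate `e + 1`) in `Σ_m b_m(λ) α_m = kδ − α_{ij;n}`
gives `b_e(λ) = k − n`. The box `(0, 0)` has residue `0`, so `b_e(λ) ≥ 1` unless `λ = ∅`, and
`λ = ∅` is impossible because `kδ − α_{ij;n} ≠ 0`. Hence `n < k`.

Conversely, for `k − n = c + 1` take the hook `λ = (ce + i, 1^{e−j})`. Its contents `col − row` run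
exactly once through `j − e, …, ce + i − 1`, so `b_m(λ) = c + [m < i] + [j ≤ m]` for
`1 ≤ m ≤ e`, and the sum `Σ_m b_m(λ) α_m` telescopes to `(c + 1)δ − e_i + e_j`.
-/

namespace SleHat

/-- The standard basis vector `e_k` of `ℝ^{e+2}` (realized inside `ℕ → ℝ`). -/
def eVec (k : ℕ) : ℕ → ℝ := fun m => if m = k then 1 else 0

/-- The standard dot product on `ℝ^{e+2}`, pairing weights and coweights. -/
def dot (e : ℕ) (x y : ℕ → ℝ) : ℝ := ∑ k ∈ Finset.range (e + 2), x k * y k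

/-- The simple roots of `ŝl_e`: `α_i = e_i − e_{i+1}` for `1 ≤ i ≤ e−1` and
`α_e = −e_1 + e_e − e_{e+1}`. -/
def simpleRoot (e i : ℕ) : ℕ → ℝ :=
  if i = e then -eVec 1 + eVec e - eVec (e + 1) else eVec i - eVec (i + 1)

/-- The simple coroots of `ŝl_e`: `α_i^∨ = e_i − e_{i+1}` for `1 ≤ i ≤ e−1` and
`α_e^∨ = e_0 − e_1 + e_e`. -/
def simpleCoroot (e i : ℕ) : ℕ → ℝ :=
  if i = e then eVec 0 - eVec 1 + eVec e else eVec i - eVec (i + 1)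

/-- The null root `δ = −e_{e+1}`. -/
def nullRoot (e : ℕ) : ℕ → ℝ := -eVec (e + 1)

/-- `δ^∨ = e_0`. -/
def deltaVee : ℕ → ℝ := eVec 0

/-- The real roots `α_{ij;n} = e_i − e_j + nδ`. -/
def alphaIJ (e i j : ℕ) (n : ℤ) : ℕ → ℝ := eVec i - eVec j + (n : ℝ) • nullRoot e

/-- `α_{ij;n}` is a positive real root: `i ≠ j` in `{1,…,e}`, with `n ≥ 0` if `i < j` and
`n > 0` if `i > j`. -/
def IsPosRoot (e i j : ℕ) (n : ℤ) : Prop :=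
  1 ≤ i ∧ i ≤ e ∧ 1 ≤ j ∧ j ≤ e ∧ i ≠ j ∧ (i < j → 0 ≤ n) ∧ (j < i → 0 < n)

/-- `ν` is dominant: `α_i^∨ · ν ≥ 0` for all `i ∈ {1,…,e}`. -/
def Dominant (e : ℕ) (ν : ℕ → ℝ) : Prop :=
  ∀ i, 1 ≤ i → i ≤ e → 0 ≤ dot e (simpleCoroot e i) ν

/-- `ν ≤ Λ`: the difference `Λ − ν` is a `ℤ_{≥0}`-combination of the simple roots. -/
def LeRoot (e : ℕ) (ν Λ : ℕ → ℝ) : Prop :=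
  ∃ c : ℕ → ℕ, Λ - ν = ∑ i ∈ Finset.Icc 1 e, (c i : ℝ) • simpleRoot e i

/-- The simple reflection `s_i(ν) = ν − (α_i^∨ · ν)·α_i`. -/
def sAct (e i : ℕ) (ν : ℕ → ℝ) : ℕ → ℝ :=
  ν - dot e (simpleCoroot e i) ν • simpleRoot e i

/-- `ν ∈ supp(Λ)`, i.e. `wν ≤ Λ` for every element `w` of the Weyl group `W` generated by the
simple reflections `s_1, …, s_e` (each `s_i` is an involution, so the elements of `W` are
exactly the products of the generators). -/
def InSupp (e : ℕ) (Λ ν : ℕ → ℝ) : Prop :=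
  ∀ L : List ℕ, (∀ i ∈ L, 1 ≤ i ∧ i ≤ e) →
    LeRoot e (L.foldr (fun i x => sAct e i x) ν) Λ

/-- The statistic `k⁺_{ij}` attached to a weight `μ` (for the highest weight `Λ`):
`max({−1} ∪ {n : α_{ij;n} ∈ N_μ})` if `i < j` and `max({0} ∪ {n : α_{ij;n} ∈ N_μ})` if `i > j`,
where `N_μ` is the set of positive real roots `α` with `μ + α ∈ supp(Λ)`.
The statistic `k⁻_{ij}` is `k⁺_{ji}`. -/
noncomputable def kplus (e : ℕ) (Λ μ : ℕ → ℝ) (i j : ℕ) : ℤ :=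
  if i < j then
    sSup ({-1} ∪ {n : ℤ | 0 ≤ n ∧ InSupp e Λ (μ + alphaIJ e i j n)})
  else
    sSup ({0} ∪ {n : ℤ | 0 < n ∧ InSupp e Λ (μ + alphaIJ e i j n)})

/-- The orthogonal projection of `ℝ^{e+2}` onto the subspace
`𝔥* = {h : h_1 + ⋯ + h_e = 0}`. -/
noncomputable def proj (e : ℕ) (v : ℕ → ℝ) : ℕ → ℝ :=
  fun k => if 1 ≤ k ∧ k ≤ e then v k - (∑ r ∈ Finset.Icc 1 e, v r) / e else v k

/-- The fundamental weight `Λ_i`: the orthogonal projection onto `𝔥*` of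
`e_0 + e_1 + ⋯ + e_i`. -/
noncomputable def fundWt (e i : ℕ) : ℕ → ℝ := proj e (∑ k ∈ Finset.range (i + 1), eVec k)

/-- A partition, encoded by its (weakly decreasing, eventually zero) sequence of parts
`p 0 ≥ p 1 ≥ ⋯` (0-indexed rows). -/
def IsPartition (p : ℕ → ℕ) : Prop :=
  (∀ a b, a ≤ b → p b ≤ p a) ∧ ∃ M, ∀ k, M ≤ k → p k = 0

/-- `b_i(λ)`: the number of boxes of `λ` of residue `≡ i (mod e)`.  Boxes are pairs `(r, c)`
(0-indexed) with `c < p r`; the box `(r, c)` has residue `c − r (mod e)`. -/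
noncomputable def resCount (e : ℕ) (p : ℕ → ℕ) (i : ℕ) : ℕ :=
  Set.ncard {rc : ℕ × ℕ | rc.2 < p rc.1 ∧
    ((rc.2 : ℤ) - (rc.1 : ℤ)) % (e : ℤ) = (i : ℤ) % (e : ℤ)}

/-- The weight of a partition: `Λ_e − Σ_{i=1}^e b_i(λ) α_i`. -/
noncomputable def wtPartition (e : ℕ) (p : ℕ → ℕ) : ℕ → ℝ :=
  fundWt e e - ∑ i ∈ Finset.Icc 1 e, (resCount e p i : ℝ) • simpleRoot e i

end SleHat

namespace SleHat

open Finset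

theorem simpleRoot_of_ne {e m : ℕ} (h : m ≠ e) : simpleRoot e m = eVec m - eVec (m + 1) :=
  if_neg h

theorem simpleRoot_self (e : ℕ) : simpleRoot e e = -eVec 1 + eVec e - eVec (e + 1) :=
  if_pos rfl

theorem sum_Ico_simpleRoot {e a b : ℕ} (hab : a ≤ b) (hb : b ≤ e) :
    ∑ m ∈ Ico a b, simpleRoot e m = eVec a - eVec b := by
  rw [← neg_sub, ← sum_Ico_sub eVec hab, ← sum_neg_distrib]
  refine sum_congr rfl fun m hm => ?_
  rw [simpleRoot_of_ne (by rw [mem_Ico] at hm; omega), neg_sub]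

theorem sum_Icc_simpleRoot {e j : ℕ} (hje : j ≤ e) :
    ∑ m ∈ Icc j e, simpleRoot e m = eVec j - eVec 1 + nullRoot e := by
  rw [← Ico_add_one_right_eq_Icc, sum_Ico_succ_top hje, sum_Ico_simpleRoot hje le_rfl,
    simpleRoot_self, nullRoot]
  abel

theorem sum_smul_simpleRoot_apply_top {e : ℕ} (he : 1 ≤ e) (c : ℕ → ℝ) :
    (∑ m ∈ Icc 1 e, c m • simpleRoot e m) (e + 1) = -c e := by
  rw [Finset.sum_apply, sum_eq_single_of_mem e (mem_Icc.2 ⟨he, le_rfl⟩)]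
  · simp [simpleRoot_self, eVec, show e ≠ 0 by omega]
  · intro m hm hme
    rw [mem_Icc] at hm
    simp only [simpleRoot_of_ne hme, Pi.smul_apply, Pi.sub_apply, eVec, smul_eq_mul]
    rw [if_neg (by omega), if_neg (by omega), sub_self, mul_zero]

theorem IsPartition.finite_boxes {p : ℕ → ℕ} (hp : IsPartition p) :
    {rc : ℕ × ℕ | rc.2 < p rc.1}.Finite := by
  obtain ⟨hmono, M, hM⟩ := hp
  refine ((Set.finite_Iio M).prod (Set.finite_Iio (p 0))).subset fun ⟨r, c⟩ hrc => ?_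
  simp only [Set.mem_ofPred_eq] at hrc
  refine ⟨?_, hrc.trans_le (hmono 0 r r.zero_le)⟩
  by_contra hr
  have := hM r (not_lt.1 hr)
  omega

theorem IsPartition.resCount_self_pos {p : ℕ → ℕ} (hp : IsPartition p) (hp0 : p 0 ≠ 0) (e : ℕ) :
    0 < resCount e p e :=
  (Set.ncard_pos (hp.finite_boxes.subset fun _ h => h.1)).2
    ⟨(0, 0), Nat.pos_of_ne_zero hp0, by simp⟩

theorem IsPartition.resCount_eq_zero {p : ℕ → ℕ} (hp : IsPartition p) (hp0 : p 0 = 0) (e m : ℕ) :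
    resCount e p m = 0 := by
  rw [resCount]
  convert Set.ncard_empty (ℕ × ℕ) using 2
  ext ⟨r, c⟩
  have := hp.1 0 r r.zero_le
  simp only [Set.mem_ofPred_eq, Set.mem_empty_iff_false, iff_false, not_and]
  omega

theorem wtPartition_eq_iff {e : ℕ} (p : ℕ → ℕ) (μ α : ℕ → ℝ) :
    wtPartition e p = fundWt e e - μ + α ↔
      ∑ m ∈ Icc 1 e, (resCount e p m : ℝ) • simpleRoot e m = μ - α := by
  rw [wtPartition, sub_add, sub_right_inj]

theorem lt_of_sum_resCount_smul_simpleRoot_eq {e i j k : ℕ} {n : ℤ} {p : ℕ → ℕ}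
    (hp : IsPartition p) (hi : 1 ≤ i) (hie : i ≤ e) (hje : j ≤ e) (hij : i ≠ j)
    (hsum : ∑ m ∈ Icc 1 e, (resCount e p m : ℝ) • simpleRoot e m
      = (k : ℝ) • nullRoot e - alphaIJ e i j n) :
    n < k := by
  have htop := congrFun hsum (e + 1)
  rw [sum_smul_simpleRoot_apply_top (hi.trans hie)] at htop
  simp only [alphaIJ, nullRoot, eVec, Pi.sub_apply, Pi.add_apply, Pi.smul_apply, Pi.neg_apply,
    smul_eq_mul, ↓reduceIte, if_neg (show e + 1 ≠ i by omega), if_neg (show e + 1 ≠ j by omega)]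
    at htop
  by_cases hp0 : p 0 = 0
  · have hcoord := congrFun hsum i
    simp only [hp.resCount_eq_zero hp0, Nat.cast_zero, zero_smul, sum_const_zero, Pi.zero_apply,
      alphaIJ, nullRoot, eVec, Pi.sub_apply, Pi.add_apply, Pi.smul_apply, Pi.neg_apply,
      smul_eq_mul, ↓reduceIte, if_neg hij, if_neg (show i ≠ e + 1 by omega)] at hcoord
    norm_num at hcoord
  · have hpos : (1 : ℝ) ≤ resCount e p e := by exact_mod_cast hp.resCount_self_pos hp0 e
    have : (n : ℝ) < k := by linarith
    exact_mod_cast this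

def hook (a l : ℕ) : ℕ → ℕ := fun r => if r = 0 then a else if r ≤ l then 1 else 0

theorem isPartition_hook {a : ℕ} (l : ℕ) (ha : 1 ≤ a) : IsPartition (hook a l) := by
  refine ⟨fun r s hrs => ?_, l + 1, fun r hr => ?_⟩ <;> unfold hook <;> split_ifs <;> omega

theorem lt_hook_iff {a l r c : ℕ} :
    c < hook a l r ↔ (r = 0 ∨ c = 0) ∧ -(l : ℤ) ≤ c - r ∧ (c : ℤ) - r < a := by
  unfold hook; split_ifs <;> omega

theorem resCount_hook (e a l m : ℕ) :
    resCount e (hook a l) m = #{x ∈ Ico (-(l : ℤ)) a | x ≡ m [ZMOD e]} := by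
  set boxes := {rc : ℕ × ℕ | rc.2 < hook a l rc.1 ∧
    ((rc.2 : ℤ) - (rc.1 : ℤ)) % (e : ℤ) = (m : ℤ) % (e : ℤ)}
  have hinj : Set.InjOn (fun rc : ℕ × ℕ => (rc.2 : ℤ) - rc.1) boxes := by
    rintro ⟨r, c⟩ ⟨h, -⟩ ⟨r', c'⟩ ⟨h', -⟩ heq
    simp only [lt_hook_iff] at h h' heq
    simp only [Prod.mk.injEq]
    omega
  rw [resCount, ← hinj.ncard_image, ← Set.ncard_coe_finset]
  congr 1
  ext x
  simp only [Set.mem_image, Set.mem_ofPred_eq, coe_filter, mem_Ico, boxes, lt_hook_iff]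
  constructor
  · rintro ⟨⟨r, c⟩, ⟨⟨-, hl, ha⟩, hmod⟩, rfl⟩
    exact ⟨⟨hl, ha⟩, hmod⟩
  · rintro ⟨⟨hl, ha⟩, hmod⟩
    refine ⟨((-x).toNat, x.toNat), ⟨⟨by omega, by omega, by omega⟩, ?_⟩, by omega⟩
    rwa [show ((x.toNat : ℕ) : ℤ) - (((-x).toNat : ℕ) : ℤ) = x by omega]

theorem ceil_intCast_div_natCast_eq_ite {e : ℕ} {x : ℤ} (h₁ : -(e : ℤ) < x) (h₂ : x ≤ e) :
    ⌈(x : ℚ) / e⌉ = if 0 < x then 1 else 0 := by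
  have he : (0 : ℚ) < e := by exact_mod_cast (show (0 : ℤ) < e by omega)
  rw [Int.ceil_eq_iff, lt_div_iff₀ he, div_le_iff₀ he]
  have h₁' : -(e : ℚ) < x := by exact_mod_cast h₁
  have h₂' : (x : ℚ) ≤ e := by exact_mod_cast h₂
  split_ifs with hx
  · have : (0 : ℚ) < x := by exact_mod_cast hx
    push_cast; constructor <;> linarith
  · have : (x : ℚ) ≤ 0 := by exact_mod_cast not_lt.1 hx
    push_cast; constructor <;> linarith

theorem Ico_filter_modEq_card_eq_ite {e i j m : ℕ} (c : ℕ) (hi : 1 ≤ i) (hie : i ≤ e) (hj : 1 ≤ j)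
    (hje : j ≤ e) (hm : 1 ≤ m) (hme : m ≤ e) :
    (#{x ∈ Ico ((j : ℤ) - e) (c * e + i) | x ≡ m [ZMOD e]} : ℤ)
      = c + (if m < i then 1 else 0) + (if j ≤ m then 1 else 0) := by
  have he : (e : ℚ) ≠ 0 := by exact_mod_cast (show e ≠ 0 by omega)
  have hupper : ⌈(((c * e + i : ℤ) : ℚ) - ((m : ℤ) : ℚ)) / ((e : ℤ) : ℚ)⌉
      = ⌈(((i : ℤ) - m : ℤ) : ℚ) / e⌉ + c := by
    rw [← Int.ceil_add_intCast]
    congr 1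
    push_cast
    field_simp
    ring
  have hlower : ⌈((((j : ℤ) - e : ℤ) : ℚ) - ((m : ℤ) : ℚ)) / ((e : ℤ) : ℚ)⌉
      = ⌈(((j : ℤ) - m : ℤ) : ℚ) / e⌉ - 1 := by
    rw [← Int.ceil_sub_one]
    congr 1
    push_cast
    field_simp
    ring
  rw [Int.Ico_filter_modEq_card _ _ (by omega), hupper, hlower,
    ceil_intCast_div_natCast_eq_ite (by omega) (by omega),
    ceil_intCast_div_natCast_eq_ite (by omega) (by omega)]
  split_ifs <;> omega

theorem resCount_hook_mul_add {e i j m : ℕ} (c : ℕ) (hi : 1 ≤ i) (hie : i ≤ e) (hj : 1 ≤ j)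
    (hje : j ≤ e) (hm : 1 ≤ m) (hme : m ≤ e) :
    (resCount e (hook (c * e + i) (e - j)) m : ℝ)
      = c + (if m < i then 1 else 0) + (if j ≤ m then 1 else 0) := by
  have hcard := Ico_filter_modEq_card_eq_ite c hi hie hj hje hm hme
  rw [resCount_hook, show -((e - j : ℕ) : ℤ) = j - e by omega]
  split_ifs at hcard ⊢ <;> exact_mod_cast hcard

theorem sum_resCount_hook_smul_simpleRoot {e i j : ℕ} (c : ℕ) (hi : 1 ≤ i) (hie : i ≤ e)
    (hj : 1 ≤ j) (hje : j ≤ e) :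
    ∑ m ∈ Icc 1 e, (resCount e (hook (c * e + i) (e - j)) m : ℝ) • simpleRoot e m
      = ((c : ℝ) + 1) • nullRoot e - eVec i + eVec j := by
  have hlow : {m ∈ Icc 1 e | m < i} = Ico 1 i := by
    ext; simp only [mem_filter, mem_Icc, mem_Ico]; omega
  have hhigh : {m ∈ Icc 1 e | j ≤ m} = Icc j e := by
    ext; simp only [mem_filter, mem_Icc]; omega
  calc ∑ m ∈ Icc 1 e, (resCount e (hook (c * e + i) (e - j)) m : ℝ) • simpleRoot e m
      = ∑ m ∈ Icc 1 e, ((c : ℝ) • simpleRoot e m + (if m < i then simpleRoot e m else 0)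
          + (if j ≤ m then simpleRoot e m else 0)) := by
        refine sum_congr rfl fun m hm => ?_
        rw [mem_Icc] at hm
        rw [resCount_hook_mul_add c hi hie hj hje hm.1 hm.2]
        split_ifs <;> module
    _ = (c : ℝ) • ∑ m ∈ Icc 1 e, simpleRoot e m + ∑ m ∈ Ico 1 i, simpleRoot e m
          + ∑ m ∈ Icc j e, simpleRoot e m := by
        rw [sum_add_distrib, sum_add_distrib, smul_sum, ← sum_filter, ← sum_filter, hlow, hhigh]
    _ = ((c : ℝ) + 1) • nullRoot e - eVec i + eVec j := by
        rw [sum_Icc_simpleRoot (by omega), sum_Ico_simpleRoot hi hie, sum_Icc_simpleRoot hje]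
        module

theorem exists_partition_wt_eq_add_alphaIJ_general (e : ℕ) (k : ℕ)
    (i j : ℕ) (n : ℤ) (h : IsPosRoot e i j n) :
    (∃ p : ℕ → ℕ, IsPartition p ∧
        wtPartition e p = (fundWt e e - (k : ℝ) • nullRoot e) + alphaIJ e i j n) ↔
      n < (k : ℤ) := by
  obtain ⟨hi, hie, hj, hje, hij, -, -⟩ := h
  simp only [wtPartition_eq_iff]
  constructor
  · rintro ⟨p, hp, hsum⟩
    exact lt_of_sum_resCount_smul_simpleRoot_eq hp hi hie hje hij hsum
  · intro hnk
    obtain ⟨c, hc⟩ : ∃ c : ℕ, (k : ℤ) - n = c + 1 := ⟨(k - n - 1).toNat, by omega⟩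
    refine ⟨hook (c * e + i) (e - j), isPartition_hook _ (hi.trans (Nat.le_add_left i _)), ?_⟩
    have hc' : (c : ℝ) + 1 = k - n := by exact_mod_cast hc.symm
    rw [sum_resCount_hook_smul_simpleRoot c hi hie hj hje, alphaIJ, hc']
    module

/-- Fix `k ≥ 0` and let `μ = Λ_e − kδ`.  For every positive real root
`α_{ij;n}` of `ŝl_e`, there is a partition `λ` with `Λ_e − Σ_{r=1}^e b_r(λ) α_r = μ + α_{ij;n}`
if and only if `n < k`. -/
theorem exists_partition_wt_eq_add_alphaIJ (e : ℕ) (he : 2 ≤ e) (k : ℕ)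
    (i j : ℕ) (n : ℤ) (h : IsPosRoot e i j n) :
    (∃ p : ℕ → ℕ, IsPartition p ∧
        wtPartition e p = (fundWt e e - (k : ℝ) • nullRoot e) + alphaIJ e i j n) ↔
      n < (k : ℤ) :=
  exists_partition_wt_eq_add_alphaIJ_general e k i j n h

end SleHat
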